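/- arXiv:2402.18203 — 2 statements merged into one kernel-verified Lean document; each statement's English description precedes it below -/
import Mathlib

section
/- Let G be a finite simple graph and G' the result of a transposition replacing edges {u,v}, {x,y} (with deg(u) = deg(x)) by {u,y}, {x,v}. Then G and G' have the same joint degree matrix: for all a, b, the number of edges whose endpoint degrees are {a,b} is the same in G and G'. -/
/-!
Removing `{u,v}`, `{x,y}` and adding `{u,y}`, `{x,v}` takes one incident edge away from each of
`u`, `v`, `x`, `y` and gives one back, so the transposition preserves every degree. Degree pairs
are therefore computed from the same degrees in both graphs, and since `deg u = deg x` the removed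
edges `{u,v}`, `{x,y}` carry the same degree pairs as the added edges `{x,v}`, `{u,y}`.
-/

open Finset SimpleGraph

/-- The graph obtained from `G` by replacing the edges `{u,v}` and `{x,y}`
with the edges `{u,y}` and `{x,v}`. -/
def transposed {V : Type*} (G : SimpleGraph V) (u v x y : V) : SimpleGraph V :=
  SimpleGraph.fromEdgeSet ((G.edgeSet \ {s(u, v), s(x, y)}) ∪ {s(u, y), s(x, v)})

theorem Finset.card_filter_sdiff_union {α : Type*} [DecidableEq α] (p : α → Prop)
    [DecidablePred p] {s t t' : Finset α} (ht : t ⊆ s) (hst' : Disjoint s t')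
    (h : #(t.filter p) = #(t'.filter p)) : #((s \ t ∪ t').filter p) = #(s.filter p) := by
  simp only [card_filter] at h ⊢
  rw [sum_union (hst'.mono_left sdiff_subset), ← h, sum_sdiff ht]

theorem Finset.card_filter_pair_congr {α : Type*} [DecidableEq α] (p : α → Prop)
    [DecidablePred p] {a b c d : α} (hab : a ≠ b) (hcd : c ≠ d) (hac : p a ↔ p c)
    (hbd : p b ↔ p d) : #(({a, b} : Finset α).filter p) = #(({c, d} : Finset α).filter p) := by
  simp only [filter_insert, filter_singleton]
  by_cases ha : p a <;> by_cases hb : p b <;> simp_all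

theorem SimpleGraph.ncard_incidenceSet_eq_ncard_neighborSet {V : Type*} [DecidableEq V]
    (H : SimpleGraph V) (w : V) : (H.incidenceSet w).ncard = (H.neighborSet w).ncard :=
  Nat.card_congr (H.incidenceSetEquivNeighborSet w)

section Transposition

variable {V : Type*} [Fintype V] [DecidableEq V] {G : SimpleGraph V} [DecidableRel G.Adj]
  {u v x y : V}

theorem edgeSet_transposed (huy : u ≠ y) (hvx : v ≠ x) :
    (transposed G u v x y).edgeSet =
      ↑(G.edgeFinset \ {s(u, v), s(x, y)} ∪ {s(u, y), s(x, v)}) := by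
  rw [transposed, edgeSet_fromEdgeSet, sdiff_eq_left.mpr]
  · push_cast [coe_edgeFinset]
    rfl
  · rw [Set.disjoint_left]
    rintro e (⟨he, -⟩ | he)
    · exact G.not_isDiag_of_mem_edgeSet he
    · rcases he with rfl | rfl <;> simp [huy, hvx.symm]

theorem ncard_filter_edgeSet_transposed (p : Sym2 V → Prop) [DecidablePred p]
    (huv : G.Adj u v) (hxy : G.Adj x y) (huy : u ≠ y) (hvx : v ≠ x)
    (hnuy : ¬ G.Adj u y) (hnxv : ¬ G.Adj x v)
    (hp : #(({s(u, v), s(x, y)} : Finset _).filter p) =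
      #(({s(u, y), s(x, v)} : Finset _).filter p)) :
    {e ∈ (transposed G u v x y).edgeSet | p e}.ncard = #(G.edgeFinset.filter p) := by
  have hsub : {s(u, v), s(x, y)} ⊆ G.edgeFinset := by simp [insert_subset_iff, huv, hxy]
  have hdisj : Disjoint G.edgeFinset {s(u, y), s(x, v)} := by simp [hnuy, hnxv]
  rw [edgeSet_transposed huy hvx, ← card_filter_sdiff_union p hsub hdisj hp,
    ← Set.ncard_coe_finset, coe_filter]
  rfl

theorem ncard_neighborSet_transposed (huv : G.Adj u v) (hxy : G.Adj x y)
    (hux : u ≠ x) (huy : u ≠ y) (hvx : v ≠ x) (hvy : v ≠ y)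
    (hnuy : ¬ G.Adj u y) (hnxv : ¬ G.Adj x v) (w : V) :
    ((transposed G u v x y).neighborSet w).ncard = G.degree w := by
  rw [← ncard_incidenceSet_eq_ncard_neighborSet, ← card_incidenceFinset_eq_degree,
    incidenceFinset_eq_filter]
  refine ncard_filter_edgeSet_transposed (w ∈ ·) huv hxy huy hvx hnuy hnxv ?_
  -- each of `u`, `v`, `x`, `y` lies on exactly one removed and one added edge
  have := huv.ne
  have := hxy.ne
  simp only [filter_insert, filter_singleton, Sym2.mem_iff]
  split_ifs <;> simp_all

end Transposition

theorem transposition_preserves_jdm_general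
    {V : Type*} [Fintype V] (G : SimpleGraph V) [DecidableRel G.Adj]
    (u v x y : V)
    (huv : G.Adj u v) (hxy : G.Adj x y)
    (huy : u ≠ y) (hvx : v ≠ x)
    (hdeg : G.degree u = G.degree x)
    (hnuy : ¬ G.Adj u y) (hnxv : ¬ G.Adj x v) :
    ∀ a b : ℕ,
      {e ∈ (transposed G u v x y).edgeSet |
          Sym2.map (fun w => ((transposed G u v x y).neighborSet w).ncard) e = s(a, b)}.ncard
        = (G.edgeFinset.filter (fun e =>
            Sym2.map (fun w => G.degree w) e = s(a, b))).card := by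
  classical
  intro a b
  have hux : u ≠ x := by rintro rfl; exact hnxv huv
  have hvy : v ≠ y := by rintro rfl; exact hnuy huv
  have hdegrees : (fun w => ((transposed G u v x y).neighborSet w).ncard) = fun w => G.degree w :=
    funext (ncard_neighborSet_transposed huv hxy hux huy hvx hvy hnuy hnxv)
  rw [hdegrees]
  refine ncard_filter_edgeSet_transposed _ huv hxy huy hvx hnuy hnxv ?_
  rw [pair_comm s(u, y)]
  refine card_filter_pair_congr _ ?_ ?_ ?_ ?_
  · simp [hux, huy]
  · simp [hux.symm, hxy.ne]
  · simp [hdeg]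
  · simp [hdeg]

theorem transposition_preserves_jdm
    {V : Type*} [Fintype V] [DecidableEq V] (G : SimpleGraph V) [DecidableRel G.Adj]
    (u v x y : V)
    (huv : G.Adj u v) (hxy : G.Adj x y)
    (hux : u ≠ x) (huy : u ≠ y) (hvx : v ≠ x) (hvy : v ≠ y)
    (hdeg : G.degree u = G.degree x)
    (hnuy : ¬ G.Adj u y) (hnxv : ¬ G.Adj x v) :
    ∀ a b : ℕ,
      {e ∈ (transposed G u v x y).edgeSet |
          Sym2.map (fun w => ((transposed G u v x y).neighborSet w).ncard) e = s(a, b)}.ncard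
        = (G.edgeFinset.filter (fun e =>
            Sym2.map (fun w => G.degree w) e = s(a, b))).card :=
  transposition_preserves_jdm_general G u v x y huv hxy huy hvx hdeg hnuy hnxv
end

section
/- Let G be a finite simple graph and G' a transposition of G (replacing edges {u,v}, {x,y} with deg_G(u) = deg_G(x) by {u,y}, {x,v}). Then the multiset of Forman–Ricci curvatures of the edges of G' equals that of G. -/
open Finset SimpleGraph

section
set_option linter.unusedSectionVars false
variable {V : Type*} {G : SimpleGraph V} {u v x y : V}

lemma transposed_edgeSet (huy : u ≠ y) (hxv : x ≠ v) :
    (transposed G u v x y).edgeSet = (G.edgeSet \ {s(u, v), s(x, y)}) ∪ {s(u, y), s(x, v)} := by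
  rw [transposed, edgeSet_fromEdgeSet]
  ext e
  simp only [Set.mem_diff, Set.mem_union, Set.mem_insert_iff, Set.mem_singleton_iff,
    Set.mem_setOf_eq, and_iff_left_iff_imp]
  rintro (⟨he, -⟩ | rfl | rfl)
  · exact G.not_isDiag_of_mem_edgeSet he
  · simpa using huy
  · simpa using hxv

lemma transposed_adj (huy : u ≠ y) (hxv : x ≠ v) {a b : V} :
    (transposed G u v x y).Adj a b ↔
      (G.Adj a b ∧ s(a, b) ≠ s(u, v) ∧ s(a, b) ≠ s(x, y)) ∨ s(a, b) = s(u, y) ∨ s(a, b) = s(x, v) := by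
  rw [← SimpleGraph.mem_edgeSet, transposed_edgeSet huy hxv]
  simp only [Set.mem_union, Set.mem_diff, Set.mem_insert_iff, Set.mem_singleton_iff,
    SimpleGraph.mem_edgeSet, not_or]

end

section
set_option linter.unusedSectionVars false
variable {V : Type*} [Fintype V] [DecidableEq V] {G : SimpleGraph V} [DecidableRel G.Adj]
variable {u v x y : V}

lemma ncard_insert_diff {s : Set V} {a b : V} (ha : a ∈ s) (hb : b ∉ s) :
    (insert b (s \ {a})).ncard = s.ncard := by
  have hfin : s.Finite := Set.toFinite s
  rw [Set.ncard_insert_of_notMem (fun h => hb h.1) (hfin.diff),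
      Set.ncard_diff_singleton_of_mem ha]
  have : 0 < s.ncard := (Set.ncard_pos hfin).mpr ⟨a, ha⟩
  omega

lemma ncard_neighborSet (p : V) : (G.neighborSet p).ncard = G.degree p := by
  rw (occs := .pos [1]) [show G.neighborSet p = ↑(G.neighborFinset p) by
        rw [SimpleGraph.neighborFinset_def, Set.coe_toFinset],
      Set.ncard_coe_finset, SimpleGraph.card_neighborFinset_eq_degree]

lemma neighborSet_u
    (huv : G.Adj u v) (hxy : G.Adj x y)
    (hux : u ≠ x) (huy : u ≠ y) (hvx : v ≠ x) (hvy : v ≠ y) :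
    (transposed G u v x y).neighborSet u = insert y (G.neighborSet u \ {v}) := by
  have huv' := huv.ne
  have hxy' := hxy.ne
  ext w
  rw [SimpleGraph.mem_neighborSet, transposed_adj huy hvx.symm]
  simp only [ne_eq, Sym2.eq_iff, Set.mem_insert_iff, Set.mem_diff, Set.mem_singleton_iff,
    SimpleGraph.mem_neighborSet, not_or, not_and]
  tauto

end

section
set_option linter.unusedSectionVars false
set_option linter.unusedVariables false
variable {V : Type*} [Fintype V] [DecidableEq V] {G : SimpleGraph V} [DecidableRel G.Adj]
variable {u v x y : V}

lemma neighborSet_v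
    (huv : G.Adj u v) (hxy : G.Adj x y)
    (hux : u ≠ x) (huy : u ≠ y) (hvx : v ≠ x) (hvy : v ≠ y) :
    (transposed G u v x y).neighborSet v = insert x (G.neighborSet v \ {u}) := by
  have huv' := huv.ne
  have hxy' := hxy.ne
  ext w
  rw [SimpleGraph.mem_neighborSet, transposed_adj huy hvx.symm]
  simp only [ne_eq, Sym2.eq_iff, Set.mem_insert_iff, Set.mem_diff, Set.mem_singleton_iff,
    SimpleGraph.mem_neighborSet, not_or, not_and]
  tauto

lemma neighborSet_x
    (huv : G.Adj u v) (hxy : G.Adj x y)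
    (hux : u ≠ x) (huy : u ≠ y) (hvx : v ≠ x) (hvy : v ≠ y) :
    (transposed G u v x y).neighborSet x = insert v (G.neighborSet x \ {y}) := by
  have huv' := huv.ne
  have hxy' := hxy.ne
  ext w
  rw [SimpleGraph.mem_neighborSet, transposed_adj huy hvx.symm]
  simp only [ne_eq, Sym2.eq_iff, Set.mem_insert_iff, Set.mem_diff, Set.mem_singleton_iff,
    SimpleGraph.mem_neighborSet, not_or, not_and]
  tauto

lemma neighborSet_y
    (huv : G.Adj u v) (hxy : G.Adj x y)
    (hux : u ≠ x) (huy : u ≠ y) (hvx : v ≠ x) (hvy : v ≠ y) :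
    (transposed G u v x y).neighborSet y = insert u (G.neighborSet y \ {x}) := by
  have huv' := huv.ne
  have hxy' := hxy.ne
  ext w
  rw [SimpleGraph.mem_neighborSet, transposed_adj huy hvx.symm]
  simp only [ne_eq, Sym2.eq_iff, Set.mem_insert_iff, Set.mem_diff, Set.mem_singleton_iff,
    SimpleGraph.mem_neighborSet, not_or, not_and]
  tauto

lemma neighborSet_other
    (huv : G.Adj u v) (hxy : G.Adj x y)
    (hux : u ≠ x) (huy : u ≠ y) (hvx : v ≠ x) (hvy : v ≠ y)
    {p : V} (hpu : p ≠ u) (hpv : p ≠ v) (hpx : p ≠ x) (hpy : p ≠ y) :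
    (transposed G u v x y).neighborSet p = G.neighborSet p := by
  have huv' := huv.ne
  have hxy' := hxy.ne
  ext w
  rw [SimpleGraph.mem_neighborSet, transposed_adj huy hvx.symm]
  simp only [ne_eq, Sym2.eq_iff, SimpleGraph.mem_neighborSet, not_or, not_and]
  constructor
  · rintro (⟨h, -⟩ | (⟨rfl, -⟩ | ⟨rfl, -⟩) | (⟨rfl, -⟩ | ⟨rfl, -⟩))
    · exact h
    · exact absurd rfl hpu
    · exact absurd rfl hpy
    · exact absurd rfl hpx
    · exact absurd rfl hpv
  · intro h
    refine Or.inl ⟨h, ⟨?_, ?_⟩, ?_, ?_⟩ <;> tauto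

lemma transposed_neighborSet_ncard
    (huv : G.Adj u v) (hxy : G.Adj x y)
    (hux : u ≠ x) (huy : u ≠ y) (hvx : v ≠ x) (hvy : v ≠ y)
    (hnuy : ¬ G.Adj u y) (hnxv : ¬ G.Adj x v) (p : V) :
    ((transposed G u v x y).neighborSet p).ncard = G.degree p := by
  by_cases hpu : p = u
  · subst hpu
    rw [neighborSet_u huv hxy hux huy hvx hvy,
      ncard_insert_diff (show v ∈ G.neighborSet p from huv)
        (show y ∉ G.neighborSet p from hnuy), ncard_neighborSet]
  by_cases hpv : p = v
  · subst hpv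
    rw [neighborSet_v huv hxy hux huy hvx hvy,
      ncard_insert_diff (show u ∈ G.neighborSet p from huv.symm)
        (show x ∉ G.neighborSet p from fun h => hnxv h.symm), ncard_neighborSet]
  by_cases hpx : p = x
  · subst hpx
    rw [neighborSet_x huv hxy hux huy hvx hvy,
      ncard_insert_diff (show y ∈ G.neighborSet p from hxy)
        (show v ∉ G.neighborSet p from hnxv), ncard_neighborSet]
  by_cases hpy : p = y
  · subst hpy
    rw [neighborSet_y huv hxy hux huy hvx hvy,
      ncard_insert_diff (show x ∈ G.neighborSet p from hxy.symm)
        (show u ∉ G.neighborSet p from fun h => hnuy h.symm), ncard_neighborSet]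
  rw [neighborSet_other huv hxy hux huy hvx hvy hpu hpv hpx hpy, ncard_neighborSet]

end


/-- The multiset of Forman--Ricci curvatures of the edges of `G'` equals that of `G`,
stated as equality of the number of edges of each curvature value. -/
theorem transposition_preserves_curvature_multiset
    {V : Type*} [Fintype V] [DecidableEq V] (G : SimpleGraph V) [DecidableRel G.Adj]
    (u v x y : V)
    (huv : G.Adj u v) (hxy : G.Adj x y)
    (hux : u ≠ x) (huy : u ≠ y) (hvx : v ≠ x) (hvy : v ≠ y)
    (hdeg : G.degree u = G.degree x)
    (hnuy : ¬ G.Adj u y) (hnxv : ¬ G.Adj x v) :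
    ∀ c : ℤ,
      {e ∈ (transposed G u v x y).edgeSet |
          Sym2.lift ⟨fun p q => (4 : ℤ)
              - ((transposed G u v x y).neighborSet p).ncard
              - ((transposed G u v x y).neighborSet q).ncard,
            fun _ _ => by ring⟩ e = c}.ncard
        = (G.edgeFinset.filter (fun e =>
            Sym2.lift ⟨fun p q => (4 : ℤ) - G.degree p - G.degree q,
              fun _ _ => by ring⟩ e = c)).card := by
  intro c
  have huv' := huv.ne
  have hxy' := hxy.ne
  set f : Sym2 V → ℤ := Sym2.lift ⟨fun p q => (4 : ℤ) - G.degree p - G.degree q,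
    fun _ _ => by ring⟩ with hf
  have hlift : ∀ e : Sym2 V,
      Sym2.lift ⟨fun p q => (4 : ℤ)
          - ((transposed G u v x y).neighborSet p).ncard
          - ((transposed G u v x y).neighborSet q).ncard,
        fun _ _ => by ring⟩ e = f e := by
    intro e
    induction e using Sym2.ind with
    | _ a b =>
      simp only [hf, Sym2.lift_mk]
      rw [transposed_neighborSet_ncard huv hxy hux huy hvx hvy hnuy hnxv a,
        transposed_neighborSet_ncard huv hxy hux huy hvx hvy hnuy hnxv b]
  have hset : {e ∈ (transposed G u v x y).edgeSet |
      Sym2.lift ⟨fun p q => (4 : ℤ)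
          - ((transposed G u v x y).neighborSet p).ncard
          - ((transposed G u v x y).neighborSet q).ncard,
        fun _ _ => by ring⟩ e = c}
      = ↑(((G.edgeFinset \ {s(u, v), s(x, y)}) ∪ {s(u, y), s(x, v)}).filter
          (fun e => f e = c)) := by
    ext e
    rw [Set.mem_setOf_eq, hlift e, transposed_edgeSet huy hvx.symm]
    simp only [Finset.coe_filter, Set.mem_setOf_eq, Finset.mem_union, Finset.mem_sdiff,
      Finset.mem_insert, Finset.mem_singleton, SimpleGraph.mem_edgeFinset,
      Set.mem_union, Set.mem_diff, Set.mem_insert_iff, Set.mem_singleton_iff]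

  rw [hset, Set.ncard_coe_finset]
  -- now pure Finset counting
  have h1 : s(u, v) ∈ G.edgeFinset := by simpa using huv
  have h2 : s(x, y) ∈ G.edgeFinset := by simpa using hxy
  have h3 : s(u, y) ∉ G.edgeFinset := by simpa using hnuy
  have h4 : s(x, v) ∉ G.edgeFinset := by simpa using hnxv
  have he12 : s(u, v) ≠ s(x, y) := by
    simp only [ne_eq, Sym2.eq_iff]; tauto
  have he34 : s(u, y) ≠ s(x, v) := by
    simp only [ne_eq, Sym2.eq_iff]; tauto
  have hP3 : f s(u, y) = f s(x, y) := by simp [hf, Sym2.lift_mk, hdeg]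
  have hP4 : f s(x, v) = f s(u, v) := by simp [hf, Sym2.lift_mk, hdeg]
  have hsub : ({s(u, v), s(x, y)} : Finset (Sym2 V)) ⊆ G.edgeFinset := by
    intro e he
    simp only [Finset.mem_insert, Finset.mem_singleton] at he
    rcases he with rfl | rfl <;> assumption
  have hsplit : G.edgeFinset = (G.edgeFinset \ {s(u, v), s(x, y)}) ∪ {s(u, v), s(x, y)} :=
    (Finset.sdiff_union_of_subset hsub).symm
  have hdisj1 : Disjoint (G.edgeFinset \ {s(u, v), s(x, y)}) ({s(u, v), s(x, y)} : Finset (Sym2 V)) :=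
    Finset.sdiff_disjoint
  have hdisj2 : Disjoint (G.edgeFinset \ {s(u, v), s(x, y)}) ({s(u, y), s(x, v)} : Finset (Sym2 V)) := by
    rw [Finset.disjoint_right]
    intro e he he'
    simp only [Finset.mem_insert, Finset.mem_singleton] at he
    have := (Finset.mem_sdiff.mp he').1
    rcases he with rfl | rfl
    · exact h3 this
    · exact h4 this
  rw [Finset.filter_union, Finset.card_union_of_disjoint
    (Finset.disjoint_filter_filter hdisj2)]
  conv_rhs => rw [hsplit, Finset.filter_union, Finset.card_union_of_disjoint
    (Finset.disjoint_filter_filter hdisj1)]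
  congr 1
  by_cases hc1 : f s(u, v) = c <;> by_cases hc2 : f s(x, y) = c <;>
    simp [Finset.filter_insert, Finset.filter_singleton, hc1, hc2, hP3, hP4,
      Finset.card_insert_of_notMem, he12, he34]
end
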